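/- arXiv:2401.06313 — 5 statements merged into one kernel-verified Lean document; each statement's English description precedes it below -/
import Mathlib

section
/- Let N_M, N_l, N_F be positive integers and N = N_F(N_M−1)+1. For every f ∈ {1,…,N_F}, every w ∈ [−1/2,1/2], and every Q_f ∈ ℂ^{N_M×N_l}, the lifting map satisfies Q_f^H a(f,w) = (R_f(Q_f))^H v_N(z), where z = exp(−2πi w). Consequently, for any tensor Q ∈ ℂ^{N_M×N_l×N_F} with slices Q_1,…,Q_{N_F} and Q̃ = [R_1(Q_1) … R_{N_F}(Q_{N_F})] ∈ ℂ^{N×N_l N_F}, one has ‖Ψ(Q,w)‖_F² = ‖Q̃^H v_N(z)‖_2², where Ψ(Q,w) ∈ ℂ^{N_F×N_l} is the matrix whose f-th row is (Q_f^H a(f,w))ᵀ. -/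
/-!
`R_f` places row `m` of `Q_f` in row `f·m`, where `v_N(z)` has the entry `z^{f·m} = a(f,w)_m`;
`f·m ≤ N_F (N_M - 1) < N` makes these rows exist. The norm identity is this equality read
column by column of `Q̃`, the column `(f, l)` of `Q̃` being column `l` of `R_{f+1}(Q_{f+1})`.
-/

open Matrix BigOperators
open scoped ComplexOrder

noncomputable section

/-- `vN N z = (z^0, z^1, …, z^{N-1})ᵀ ∈ ℂ^N`. -/
def vN (N : ℕ) (z : ℂ) : Fin N → ℂ := fun i => z ^ (i : ℕ)

/-- Array manifold vector `a(f,w) ∈ ℂ^{N_M}`, with `a(f,w)_m = exp(-2πi·w·f·(m-1))`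
(0-indexed: entry `m` is `exp(-2πi·w·f·m)`). -/
def aVec (N_M : ℕ) (f : ℕ) (w : ℝ) : Fin N_M → ℂ :=
  fun m => Complex.exp ((-(2 * Real.pi * w * f * (m : ℕ)) : ℝ) * Complex.I)

/-- The lifting map `R_f : ℂ^{N_M×N_l} → ℂ^{N×N_l}`: row `m` of `Q` is placed in row
`f·(m-1)+1` (0-indexed: row `f·m`) of the output, all other rows are zero. -/
def Rlift (N_M N_l N : ℕ) (f : ℕ) (Q : Matrix (Fin N_M) (Fin N_l) ℂ) :
    Matrix (Fin N) (Fin N_l) ℂ :=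
  fun i l => ∑ m : Fin N_M, if (i : ℕ) = f * (m : ℕ) then Q m l else 0

/-- The lifted matrix `Q̃ = [R_1(Q_1) … R_{N_F}(Q_{N_F})] ∈ ℂ^{N × N_l N_F}`. -/
def Qtilde (N_M N_l N_F N : ℕ) (Q : Fin N_M → Fin N_l → Fin N_F → ℂ) :
    Matrix (Fin N) (Fin N_F × Fin N_l) ℂ :=
  fun i q => Rlift N_M N_l N ((q.1 : ℕ) + 1) (fun m l => Q m l q.1) i q.2

/-- Frobenius norm of a complex matrix. -/
def frobNorm {m n : Type*} [Fintype m] [Fintype n] (X : Matrix m n ℂ) : ℝ :=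
  Real.sqrt (∑ i, ∑ j, Complex.normSq (X i j))

/-- Dual polynomial matrix `Ψ(Q,w) ∈ ℂ^{N_F × N_l}`, whose `f`-th row is `(Q_fᴴ a(f,w))ᵀ`. -/
def Psi (N_M N_l N_F : ℕ) (Q : Fin N_M → Fin N_l → Fin N_F → ℂ) (w : ℝ) :
    Matrix (Fin N_F) (Fin N_l) ℂ :=
  fun f l => ∑ m, (starRingEnd ℂ) (Q m l f) * aVec N_M ((f : ℕ) + 1) w m

lemma frobNorm_sq {m n : Type*} [Fintype m] [Fintype n] (X : Matrix m n ℂ) :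
    frobNorm X ^ 2 = ∑ i, ∑ j, Complex.normSq (X i j) :=
  Real.sq_sqrt <| Finset.sum_nonneg fun _ _ => Finset.sum_nonneg fun _ _ => Complex.normSq_nonneg _

lemma aVec_eq_pow (N_M f : ℕ) (w : ℝ) (m : Fin N_M) :
    aVec N_M f w m = Complex.exp ((-(2 * Real.pi * w) : ℝ) * Complex.I) ^ (f * (m : ℕ)) := by
  rw [aVec, ← Complex.exp_nat_mul]
  push_cast
  ring_nf

lemma conjTranspose_Rlift_mulVec {N_M N_l N f : ℕ} (hf : ∀ m : Fin N_M, f * (m : ℕ) < N)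
    (Q : Matrix (Fin N_M) (Fin N_l) ℂ) (v : Fin N → ℂ) :
    (Rlift N_M N_l N f Q)ᴴ *ᵥ v = Qᴴ *ᵥ fun m => v ⟨f * m, hf m⟩ := by
  ext l
  simp only [mulVec, dotProduct, conjTranspose_apply, Rlift, star_sum, Finset.sum_mul]
  rw [Finset.sum_comm]
  refine Finset.sum_congr rfl fun m _ => ?_
  have hrow : ∀ i : Fin N, ((i : ℕ) = f * m) ↔ i = ⟨f * m, hf m⟩ := fun i => by rw [Fin.ext_iff]
  simp only [hrow, apply_ite star, star_zero, ite_mul, zero_mul, Finset.sum_ite_eq', Finset.mem_univ,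
    if_true]

lemma conjTranspose_mulVec_aVec_eq_Rlift {N_M N_l N f : ℕ} (hf : ∀ m : Fin N_M, f * (m : ℕ) < N)
    (w : ℝ) (Q : Matrix (Fin N_M) (Fin N_l) ℂ) :
    Qᴴ *ᵥ aVec N_M f w =
      (Rlift N_M N_l N f Q)ᴴ *ᵥ vN N (Complex.exp ((-(2 * Real.pi * w) : ℝ) * Complex.I)) := by
  rw [conjTranspose_Rlift_mulVec hf]
  congr 1
  ext m
  exact aVec_eq_pow N_M f w m

lemma Psi_apply (N_M N_l N_F : ℕ) (Q : Fin N_M → Fin N_l → Fin N_F → ℂ) (w : ℝ)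
    (f : Fin N_F) (l : Fin N_l) :
    Psi N_M N_l N_F Q w f l = ((of fun m l => Q m l f)ᴴ *ᵥ aVec N_M (f + 1) w) l :=
  rfl

lemma conjTranspose_Qtilde_mulVec_apply (N_M N_l N_F N : ℕ) (Q : Fin N_M → Fin N_l → Fin N_F → ℂ)
    (v : Fin N → ℂ) (f : Fin N_F) (l : Fin N_l) :
    ((Qtilde N_M N_l N_F N Q)ᴴ *ᵥ v) (f, l) =
      ((Rlift N_M N_l N (f + 1) (of fun m l => Q m l f))ᴴ *ᵥ v) l :=
  rfl

theorem stmt2_general (N_M N_l N_F : ℕ) (N : ℕ) (hN : N = N_F * (N_M - 1) + 1) :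
    (∀ f : ℕ, 1 ≤ f → f ≤ N_F → ∀ w ∈ Set.Icc (-(1:ℝ)/2) (1/2),
      ∀ Qf : Matrix (Fin N_M) (Fin N_l) ℂ,
        Qfᴴ.mulVec (aVec N_M f w) =
          (Rlift N_M N_l N f Qf)ᴴ.mulVec
            (vN N (Complex.exp ((-(2 * Real.pi * w) : ℝ) * Complex.I)))) ∧
    (∀ (Q : Fin N_M → Fin N_l → Fin N_F → ℂ), ∀ w ∈ Set.Icc (-(1:ℝ)/2) (1/2),
      frobNorm (Psi N_M N_l N_F Q w) ^ 2 =
        ∑ q : Fin N_F × Fin N_l,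
          Complex.normSq
            ((Qtilde N_M N_l N_F N Q)ᴴ.mulVec
              (vN N (Complex.exp ((-(2 * Real.pi * w) : ℝ) * Complex.I))) q)) := by
  have hrows : ∀ f ≤ N_F, ∀ m : Fin N_M, f * (m : ℕ) < N := fun f hf m => by
    have := Nat.mul_le_mul hf (Nat.le_sub_one_of_lt m.isLt)
    omega
  refine ⟨fun f _ hf w _ Qf => conjTranspose_mulVec_aVec_eq_Rlift (hrows f hf) w Qf, ?_⟩
  intro Q w _
  rw [frobNorm_sq, ← Finset.sum_product']
  refine Finset.sum_congr rfl fun ⟨f, l⟩ _ => ?_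
  rw [Psi_apply, conjTranspose_Qtilde_mulVec_apply,
    conjTranspose_mulVec_aVec_eq_Rlift (hrows _ f.isLt)]

/-- The lifting map satisfies `Q_fᴴ a(f,w) = (R_f(Q_f))ᴴ v_N(z)` with `z = exp(-2πi w)`;
consequently `‖Ψ(Q,w)‖_F² = ‖Q̃ᴴ v_N(z)‖₂²`. -/
theorem stmt2 (N_M N_l N_F : ℕ) (hM : 0 < N_M) (hl : 0 < N_l) (hF : 0 < N_F)
    (N : ℕ) (hN : N = N_F * (N_M - 1) + 1) :
    (∀ f : ℕ, 1 ≤ f → f ≤ N_F → ∀ w ∈ Set.Icc (-(1:ℝ)/2) (1/2),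
      ∀ Qf : Matrix (Fin N_M) (Fin N_l) ℂ,
        Qfᴴ.mulVec (aVec N_M f w) =
          (Rlift N_M N_l N f Qf)ᴴ.mulVec
            (vN N (Complex.exp ((-(2 * Real.pi * w) : ℝ) * Complex.I)))) ∧
    (∀ (Q : Fin N_M → Fin N_l → Fin N_F → ℂ), ∀ w ∈ Set.Icc (-(1:ℝ)/2) (1/2),
      frobNorm (Psi N_M N_l N_F Q w) ^ 2 =
        ∑ q : Fin N_F × Fin N_l,
          Complex.normSq
            ((Qtilde N_M N_l N_F N Q)ᴴ.mulVec
              (vN N (Complex.exp ((-(2 * Real.pi * w) : ℝ) * Complex.I))) q)) :=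
  stmt2_general N_M N_l N_F N hN
end
end

section
/- Let N, L be positive integers, P₀ ∈ ℂ^{N×N} Hermitian and Q̃ ∈ ℂ^{N×L}. Suppose the block matrix [[P₀, Q̃],[Q̃^H, I_L]] is positive semidefinite and ∑_{i=1}^{N−k} P₀(i, i+k) = δ_{k,0} for all k = 0, 1, …, N−1. Then for every z ∈ ℂ with |z| = 1, ‖Q̃^H v_N(z)‖_2 ≤ 1. -/
/-!
On the unit circle `conj z = z⁻¹`, so the `(i, j)` term of `vN(z)ᴴ P₀ vN(z)` is
`P₀ i j z^(j-i)`. Grouping by `j - i`, the quadratic form is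
`∑ₖ dₖ zᵏ + ∑_{k ≥ 1} conj(dₖ) conj(z)ᵏ`, where `dₖ` is the sum of the `k`-th superdiagonal of `P₀`
(the lower diagonals are conjugates of the upper ones since `P₀` is Hermitian). The trace
conditions `dₖ = δₖ₀` make it equal to `1`. The Schur complement of the identity block,
`P₀ - Q̃ Q̃ᴴ ⪰ 0`, then gives `‖Q̃ᴴ vN(z)‖² ≤ vN(z)ᴴ P₀ vN(z) = 1`.
-/
open Matrix BigOperators
open scoped ComplexOrder

noncomputable section

theorem Matrix.PosSemidef.dotProduct_conjTranspose_mulVec_le {m n 𝕜 : Type*} [Fintype m]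
    [Fintype n] [DecidableEq n] [RCLike 𝕜] {A : Matrix m m 𝕜} {B : Matrix m n 𝕜}
    (h : (fromBlocks A B Bᴴ 1).PosSemidef) (v : m → 𝕜) :
    star (Bᴴ *ᵥ v) ⬝ᵥ Bᴴ *ᵥ v ≤ star v ⬝ᵥ A *ᵥ v := by
  have : Invertible (1 : Matrix n n 𝕜) := invertibleOne
  have hschur := ((PosDef.fromBlocks₂₂ A B (PosDef.one : (1 : Matrix n n 𝕜).PosDef)).1 h
    ).dotProduct_mulVec_nonneg v
  have hstar : star v ᵥ* B = star (Bᴴ *ᵥ v) := by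
    rw [star_mulVec, conjTranspose_conjTranspose]
  rwa [inv_one, Matrix.mul_one, sub_mulVec, dotProduct_sub, sub_nonneg, ← mulVec_mulVec,
    dotProduct_mulVec (star v) B, hstar] at hschur

theorem Finset.sum_ite_eq_add {M : Type*} [AddCommMonoid M] (s : Finset ℕ) (i j : ℕ)
    (f : ℕ → M) :
    ∑ k ∈ s, (if j = i + k then f k else 0) = if i ≤ j ∧ j - i ∈ s then f (j - i) else 0 := by
  split_ifs with h
  · rw [sum_eq_single_of_mem (j - i) h.2 fun k _ hk => if_neg (by omega), if_pos (by omega)]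
  · refine sum_eq_zero fun k hk => if_neg fun hjk => h ⟨by omega, ?_⟩
    rwa [show j - i = k by omega]

theorem pow_mul_pow_of_mul_eq_one {M : Type*} [CommMonoid M] {c z : M} (h : c * z = 1)
    {i j : ℕ} (hij : i ≤ j) : c ^ i * z ^ j = z ^ (j - i) := by
  rw [← Nat.add_sub_cancel' hij, pow_add, ← mul_assoc, ← mul_pow, h, one_pow, one_mul,
    Nat.add_sub_cancel_left]

def superdiagSum {R : Type*} [AddCommMonoid R] {N : ℕ} (P : Matrix (Fin N) (Fin N) R)
    (k : ℕ) : R :=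
  ∑ i : Fin N, ∑ j : Fin N, if (j : ℕ) = (i : ℕ) + k then P i j else 0

theorem Matrix.IsHermitian.superdiagSum_transpose {R : Type*} [AddCommMonoid R]
    [StarAddMonoid R] {N : ℕ} {P : Matrix (Fin N) (Fin N) R} (hP : P.IsHermitian) (k : ℕ) :
    superdiagSum Pᵀ k = star (superdiagSum P k) := by
  simp only [superdiagSum, transpose_apply, star_sum, apply_ite star, star_zero, hP.apply]

open Finset in
theorem dotProduct_mulVec_vN {N : ℕ} (P : Matrix (Fin N) (Fin N) ℂ) {z : ℂ}
    (hz : star z * z = 1) :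
    star (vN N z) ⬝ᵥ P *ᵥ vN N z =
      ∑ k ∈ range N, superdiagSum P k * z ^ k + ∑ k ∈ Ico 1 N, superdiagSum Pᵀ k * star z ^ k := by
  have entry (i j : Fin N) : star z ^ (i : ℕ) * (P i j * z ^ (j : ℕ)) =
      ∑ k ∈ range N, (if (j : ℕ) = i + k then P i j * z ^ k else 0) +
        ∑ k ∈ Ico 1 N, (if (i : ℕ) = j + k then P i j * star z ^ k else 0) := by
    rw [sum_ite_eq_add, sum_ite_eq_add]
    rcases le_or_gt (i : ℕ) j with h | h
    · rw [if_pos ⟨h, mem_range.2 (by omega)⟩, if_neg (by simp only [mem_Ico]; omega), add_zero,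
        mul_left_comm, pow_mul_pow_of_mul_eq_one hz h]
    · rw [if_neg (by omega), if_pos ⟨h.le, mem_Ico.2 ⟨by omega, by omega⟩⟩, zero_add,
        mul_left_comm, mul_comm (star z ^ _), pow_mul_pow_of_mul_eq_one (by rwa [mul_comm]) h.le]
  calc star (vN N z) ⬝ᵥ P *ᵥ vN N z
      = ∑ i : Fin N, ∑ j : Fin N, star z ^ (i : ℕ) * (P i j * z ^ (j : ℕ)) := by
        simp [dotProduct, mulVec, vN, mul_sum]
    _ = _ := by
        simp only [entry, sum_add_distrib, superdiagSum, transpose_apply, sum_mul, ite_mul,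
          zero_mul]
        congr 1
        · exact sum_comm_cycle
        · rw [sum_comm_cycle]
          exact sum_congr rfl fun _ _ => sum_comm

open Finset in
theorem dotProduct_mulVec_vN_eq_one {N : ℕ} (hN : 0 < N) {P : Matrix (Fin N) (Fin N) ℂ}
    (hP : P.IsHermitian) (hdiag : ∀ k < N, superdiagSum P k = if k = 0 then 1 else 0) {z : ℂ}
    (hz : star z * z = 1) :
    star (vN N z) ⬝ᵥ P *ᵥ vN N z = 1 := by
  have hupper : ∑ k ∈ range N, superdiagSum P k * z ^ k = 1 := by
    rw [sum_eq_single_of_mem 0 (mem_range.2 hN) fun k hk hk0 => by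
        rw [hdiag k (mem_range.1 hk), if_neg hk0, zero_mul],
      hdiag 0 hN, if_pos rfl, pow_zero, mul_one]
  have hlower : ∑ k ∈ Ico 1 N, superdiagSum Pᵀ k * star z ^ k = 0 :=
    sum_eq_zero fun k hk => by
      rw [mem_Ico] at hk
      rw [hP.superdiagSum_transpose, hdiag k hk.2, if_neg (by omega), star_zero, zero_mul]
  rw [dotProduct_mulVec_vN P hz, hupper, hlower, add_zero]

theorem Complex.star_dotProduct_self {n : Type*} [Fintype n] (w : n → ℂ) :
    star w ⬝ᵥ w = ((∑ p, Complex.normSq (w p) : ℝ) : ℂ) := by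
  simp [dotProduct, Complex.normSq_eq_conj_mul_self]

theorem stmt4_general (N L : ℕ) (hN : 0 < N)
    (P₀ : Matrix (Fin N) (Fin N) ℂ) (Qt : Matrix (Fin N) (Fin L) ℂ)
    (hHerm : P₀.IsHermitian)
    (hPSD : (Matrix.fromBlocks P₀ Qt Qtᴴ (1 : Matrix (Fin L) (Fin L) ℂ)).PosSemidef)
    (htr : ∀ k : ℕ, k < N →
      (∑ i : Fin N, ∑ j : Fin N, if (j : ℕ) = (i : ℕ) + k then P₀ i j else 0)
        = if k = 0 then 1 else 0)
    (z : ℂ) (hz : ‖z‖ = 1) :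
    Real.sqrt (∑ p, Complex.normSq (Qtᴴ.mulVec (vN N z) p)) ≤ 1 := by
  have hunit : star z * z = 1 := by
    rw [Complex.star_def, Complex.conj_mul', hz, Complex.ofReal_one, one_pow]
  have hle := hPSD.dotProduct_conjTranspose_mulVec_le (vN N z)
  rw [dotProduct_mulVec_vN_eq_one hN hHerm htr hunit, Complex.star_dotProduct_self] at hle
  exact Real.sqrt_le_one.2 (mod_cast hle)

/-- If `P₀` is Hermitian with `[[P₀, Q̃],[Q̃ᴴ, I_L]] ⪰ 0` and
`∑_{i=1}^{N-k} P₀(i,i+k) = δ_{k,0}` for `k = 0,…,N-1`, then `‖Q̃ᴴ v_N(z)‖₂ ≤ 1` for every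
`z` on the unit circle. -/
theorem stmt4 (N L : ℕ) (hN : 0 < N) (hL : 0 < L)
    (P₀ : Matrix (Fin N) (Fin N) ℂ) (Qt : Matrix (Fin N) (Fin L) ℂ)
    (hHerm : P₀.IsHermitian)
    (hPSD : (Matrix.fromBlocks P₀ Qt Qtᴴ (1 : Matrix (Fin L) (Fin L) ℂ)).PosSemidef)
    (htr : ∀ k : ℕ, k < N →
      (∑ i : Fin N, ∑ j : Fin N, if (j : ℕ) = (i : ℕ) + k then P₀ i j else 0)
        = if k = 0 then 1 else 0)
    (z : ℂ) (hz : ‖z‖ = 1) :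
    Real.sqrt (∑ p, Complex.normSq (Qtᴴ.mulVec (vN N z) p)) ≤ 1 :=
  stmt4_general N L hN P₀ Qt hHerm hPSD htr z hz

end
end

section
/- Let N_M ≥ 1, N_F ≥ 1, M ⊆ {0,1,…,N_M−1}, F ⊆ {1,…,N_F}, U = {m·f : m ∈ M, f ∈ F} with elements U_1 < U_2 < … < U_{N_u}, and N = N_F(N_M−1)+1. Let u = (u_0,…,u_{N−1}) ∈ ℂ^N be such that Toep(u) is positive semidefinite, and let K = rank(Toep(u)). Then T(u) ∈ ℂ^{N_u×N_u} is an (N_u, K)-irregular Toeplitz matrix: there exist distinct z_1,…,z_K ∈ ℂ with |z_k| = 1 and positive reals d_1,…,d_K such that T(u) = W(γ,z)·diag(d_1,…,d_K)·W(γ,z)^H, where γ = (U_1,…,U_{N_u}) and W(γ,z) ∈ ℂ^{N_u×K} is the irregular Vandermonde matrix with entries W(γ,z)(i,k) = z_k^{γ_i}. -/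
/-!
A positive semidefinite Toeplitz matrix `Toep(u)` is the Gram matrix of vectors `c₀, …, c_{N-1}`,
and its shift invariance makes `cᵢ ↦ cᵢ₊₁` extend to a linear isometry `S`, so that
`u_n = ⟪c₀, Sⁿ c₀⟫`. A linear isometry of a finite-dimensional complex space has no proper
generalized eigenvectors and its eigenspaces are orthogonal with unimodular eigenvalues, so
splitting `c₀` into eigenvectors gives `u_n = ∑ d_k ζ_kⁿ` with at most `N` distinct unimodular
`ζ_k` and `d_k > 0` (Carathéodory–Fejér). Thus `Toep(u) = Vᴴ diag(d) V` with `V` the rectangular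
Vandermonde matrix of the `ζ_k`, which has full row rank, so the number of atoms is the rank `K`;
`T(u)` is the `U × U` block of this factorization, with `z_k = conj ζ_k`.
-/

open Matrix BigOperators
open scoped ComplexOrder

noncomputable section

/-- Hermitian Toeplitz matrix `Toep(u) ∈ ℂ^{N×N}`: `Toep(u)(i,j) = u_{j-i}` if `j ≥ i`,
and `conj(u_{i-j})` otherwise. -/
def ToepMat (N : ℕ) (u : Fin N → ℂ) : Matrix (Fin N) (Fin N) ℂ :=
  fun i j =>
    if (i : ℕ) ≤ (j : ℕ) then
      u ⟨(j : ℕ) - (i : ℕ), lt_of_le_of_lt (Nat.sub_le _ _) j.isLt⟩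
    else
      (starRingEnd ℂ) (u ⟨(i : ℕ) - (j : ℕ), lt_of_le_of_lt (Nat.sub_le _ _) i.isLt⟩)

/-- The irregular matrix `T(v) ∈ ℂ^{N_u×N_u}` built from `v ∈ ℂ^N` and the sorted index
set `U`: `T(v)(i,j) = v_{U_j-U_i}` if `U_j ≥ U_i` and `conj(v_{U_i-U_j})` otherwise;
equivalently, `T(v) = P_U Toep(v) P_Uᴴ`. -/
def Tirr (N N_u : ℕ) (U : Fin N_u → Fin N) (v : Fin N → ℂ) :
    Matrix (Fin N_u) (Fin N_u) ℂ :=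
  fun i j => ToepMat N v (U i) (U j)

open ComplexConjugate
open scoped InnerProductSpace

namespace Complex

theorem conj_pow_mul_pow_of_le {z : ℂ} (hz : ‖z‖ = 1) {i j : ℕ} (h : i ≤ j) :
    conj (z ^ i) * z ^ j = z ^ (j - i) := by
  have hz0 : z ≠ 0 := norm_ne_zero_iff.mp (by simp [hz])
  rw [map_pow, ← inv_eq_conj hz, inv_pow, pow_sub₀ _ hz0 h, mul_comm]

theorem conj_pow_mul_pow_of_ge {z : ℂ} (hz : ‖z‖ = 1) {i j : ℕ} (h : j ≤ i) :
    conj (z ^ i) * z ^ j = conj (z ^ (i - j)) := by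
  have := conj_pow_mul_pow_of_le (z := conj z) (by simpa using hz) h
  simp only [map_pow, conj_conj] at this ⊢
  rw [mul_comm, this]

end Complex

namespace LinearIsometry

variable {𝕜 E : Type*} [RCLike 𝕜] [NormedAddCommGroup E] [InnerProductSpace 𝕜 E]

theorem exists_apply_eq_of_gram_eq [FiniteDimensional 𝕜 E] {ι : Type*} [Fintype ι]
    {x y : ι → E} (h : gram 𝕜 x = gram 𝕜 y) : ∃ S : E →ₗᵢ[𝕜] E, ∀ i, S (x i) = y i := by
  classical
  let X := Fintype.linearCombination 𝕜 x
  let Y := Fintype.linearCombination 𝕜 y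
  have inner_Y : ∀ a b, ⟪Y a, Y b⟫_𝕜 = ⟪X a, X b⟫_𝕜 := fun a b => by
    have hxy : ∀ i j, ⟪y i, y j⟫_𝕜 = ⟪x i, x j⟫_𝕜 := fun i j => (congr_fun₂ h i j).symm
    simp only [X, Y, Fintype.linearCombination_apply, sum_inner, inner_sum, inner_smul_left,
      inner_smul_right, hxy]
  have ker_le : LinearMap.ker X ≤ LinearMap.ker Y := fun a ha => by
    rw [LinearMap.mem_ker] at ha ⊢
    rw [← inner_self_eq_zero (𝕜 := 𝕜), inner_Y, ha, inner_zero_left]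
  let L : LinearMap.range X →ₗ[𝕜] E :=
    (LinearMap.ker X).liftQ Y ker_le ∘ₗ X.quotKerEquivRange.symm.toLinearMap
  have L_apply : ∀ a, L (X.rangeRestrict a) = Y a := fun a => by
    have : X.quotKerEquivRange.symm (X.rangeRestrict a) = Submodule.Quotient.mk a := by
      rw [LinearEquiv.symm_apply_eq]
      exact Subtype.ext (X.quotKerEquivRange_apply_mk a).symm
    simp only [L, LinearMap.comp_apply, LinearEquiv.coe_coe, this, Submodule.liftQ_apply]
  have L_inner : ∀ p q, ⟪L p, L q⟫_𝕜 = ⟪p, q⟫_𝕜 := by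
    intro p q
    obtain ⟨a, rfl⟩ := X.surjective_rangeRestrict p
    obtain ⟨b, rfl⟩ := X.surjective_rangeRestrict q
    rw [L_apply, L_apply, inner_Y]
    rfl
  refine ⟨(L.isometryOfInner L_inner).extend, fun i => ?_⟩
  have hx : x i = X (Pi.single i 1) := by simp [X]
  have hy : y i = Y (Pi.single i 1) := by simp [Y]
  rw [hy, ← L_apply, ← LinearMap.coe_isometryOfInner L L_inner,
    ← LinearIsometry.extend_apply, LinearMap.codRestrict_apply, hx]

theorem exists_iterate_apply_eq_of_gram_eq [FiniteDimensional 𝕜 E] {n : ℕ} (c : Fin (n + 1) → E)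
    (h : gram 𝕜 (c ∘ Fin.castSucc) = gram 𝕜 (c ∘ Fin.succ)) :
    ∃ S : E →ₗᵢ[𝕜] E, ∀ i : Fin (n + 1), S^[i] (c 0) = c i := by
  obtain ⟨S, hS⟩ := exists_apply_eq_of_gram_eq h
  refine ⟨S, Fin.induction (by simp) fun i ih => ?_⟩
  rw [Fin.val_succ, Function.iterate_succ_apply', ← Fin.val_castSucc, ih]
  exact hS i

theorem norm_eq_one_of_apply_eq_smul (f : E →ₗᵢ[𝕜] E) {μ : 𝕜} {v : E} (hv : f v = μ • v)
    (hv0 : v ≠ 0) : ‖μ‖ = 1 := by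
  have h := f.norm_map v
  rw [hv, norm_smul] at h
  exact (mul_eq_right₀ (norm_ne_zero_iff.mpr hv0)).mp h

theorem eq_zero_of_apply_eq_smul_add (f : E →ₗᵢ[𝕜] E) {μ : 𝕜} {v w : E} (hw : f w = μ • w)
    (hv : f v = μ • v + w) : w = 0 := by
  by_contra hw0
  have hμ := f.norm_eq_one_of_apply_eq_smul hw hw0
  have hμ0 : μ ≠ 0 := by rintro rfl; simp at hμ
  -- `⟪f v, f w⟫ = ⟪v, w⟫ + μ ‖w‖²`, while `f` preserves inner products
  have h := f.inner_map_map v w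
  rw [hv, hw, inner_add_left, inner_smul_left, inner_smul_right, inner_smul_right, ← mul_assoc,
    RCLike.conj_mul, hμ, RCLike.ofReal_one, one_pow, one_mul] at h
  have : μ * ⟪w, w⟫_𝕜 = 0 := by linear_combination h
  exact hw0 (inner_self_eq_zero.mp ((mul_eq_zero.mp this).resolve_left hμ0))

theorem apply_eq_smul_of_pow_sub_smul_apply_eq_zero (f : E →ₗᵢ[𝕜] E) {μ : 𝕜} {k : ℕ} {v : E}
    (hv : ((f.toLinearMap - μ • 1) ^ k) v = 0) : f v = μ • v := by
  induction k generalizing v with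
  | zero => simp_all
  | succ k ih =>
    have hw := ih (v := (f.toLinearMap - μ • 1) v) (by rwa [← Module.End.mul_apply, ← pow_succ])
    have h0 := f.eq_zero_of_apply_eq_smul_add hw (v := v) (by simp)
    simpa [sub_eq_zero] using h0

theorem inner_eq_zero_of_apply_eq_smul (f : E →ₗᵢ[𝕜] E) {μ ν : 𝕜} {x y : E} (hx : f x = μ • x)
    (hy : f y = ν • y) (hx0 : x ≠ 0) (hμν : μ ≠ ν) : ⟪x, y⟫_𝕜 = 0 := by
  have hμ1 := f.norm_eq_one_of_apply_eq_smul hx hx0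
  have hμ0 : μ ≠ 0 := by rintro rfl; simp at hμ1
  have hμ := RCLike.inv_eq_conj hμ1
  have h := f.inner_map_map x y
  rw [hx, hy, inner_smul_left, inner_smul_right, ← hμ, ← mul_assoc] at h
  by_contra hxy
  exact hμν (inv_mul_eq_one₀ hμ0 |>.mp ((mul_eq_right₀ hxy).mp h))

end LinearIsometry

section

variable {E : Type*} [NormedAddCommGroup E] [InnerProductSpace ℂ E] [FiniteDimensional ℂ E]

theorem LinearIsometry.exists_inner_iterate_eq_sum (f : E →ₗᵢ[ℂ] E) (v : E) :
    ∃ (m : ℕ) (ζ : Fin m → ℂ) (d : Fin m → ℝ), m ≤ Module.finrank ℂ E ∧ Function.Injective ζ ∧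
      (∀ k, ‖ζ k‖ = 1) ∧ (∀ k, 0 < d k) ∧ ∀ n : ℕ, ⟪v, f^[n] v⟫_ℂ = ∑ k, (d k : ℂ) * ζ k ^ n := by
  classical
  obtain ⟨g, hg, hv⟩ := (Submodule.mem_iSup_iff_exists_finsupp _ v).mp
    ((Module.End.iSup_maxGenEigenspace_eq_top f.toLinearMap).symm ▸ Submodule.mem_top)
  set s := g.support
  have eigen : ∀ μ, f (g μ) = μ • g μ := fun μ => by
    obtain ⟨k, hk⟩ := (Module.End.mem_maxGenEigenspace _ _ _).mp (hg μ)
    exact f.apply_eq_smul_of_pow_sub_smul_apply_eq_zero hk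
  have iterate : ∀ n μ, f^[n] (g μ) = μ ^ n • g μ := fun n μ => by
    induction n with
    | zero => simp
    | succ n ih => rw [Function.iterate_succ_apply', ih, map_smul, eigen, smul_smul, pow_succ]
  have ne_zero : ∀ μ ∈ s, g μ ≠ 0 := fun μ => Finsupp.mem_support_iff.mp
  have orthogonal : ∀ μ ∈ s, ∀ ν, μ ≠ ν → ⟪g μ, g ν⟫_ℂ = 0 := fun μ hμ ν =>
    f.inner_eq_zero_of_apply_eq_smul (eigen μ) (eigen ν) (ne_zero μ hμ)
  have card_le : s.card ≤ Module.finrank ℂ E := by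
    have := (linearIndependent_of_ne_zero_of_inner_eq_zero (𝕜 := ℂ) (v := fun μ : s => g μ)
      (fun μ => ne_zero μ μ.2)
      (fun μ ν hμν => orthogonal μ μ.2 ν (Subtype.coe_injective.ne hμν))).fintype_card_le_finrank
    rwa [Fintype.card_coe] at this
  have inner_eq : ∀ n : ℕ, ⟪v, f^[n] v⟫_ℂ = ∑ μ ∈ s, ((‖g μ‖ ^ 2 : ℝ) : ℂ) * μ ^ n := fun n => by
    rw [← hv, Finsupp.sum, ← coe_pow, map_sum, coe_pow, sum_inner]
    refine Finset.sum_congr rfl fun μ hμ => ?_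
    rw [inner_sum, Finset.sum_eq_single μ (fun ν _ hνμ => by
      rw [iterate, inner_smul_right, orthogonal μ hμ ν hνμ.symm, mul_zero]) (absurd hμ),
      iterate, inner_smul_right, inner_self_eq_norm_sq_to_K, mul_comm]
    norm_cast
  let e := s.equivFin
  refine ⟨s.card, fun k => e.symm k, fun k => ‖g (e.symm k)‖ ^ 2, card_le,
    Subtype.coe_injective.comp e.symm.injective, fun k => ?_, fun k => ?_, fun n => ?_⟩
  · exact f.norm_eq_one_of_apply_eq_smul (eigen _) (ne_zero _ (e.symm k).2)
  · exact pow_pos (norm_pos_iff.mpr (ne_zero _ (e.symm k).2)) 2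
  · rw [inner_eq, ← Finset.sum_coe_sort s]
    exact (Equiv.sum_comp e.symm (fun μ : s => ((‖g μ‖ ^ 2 : ℝ) : ℂ) * (μ : ℂ) ^ n)).symm

end

theorem Matrix.PosSemidef.exists_gram_eq {𝕜 n : Type*} [RCLike 𝕜] [Fintype n] {A : Matrix n n 𝕜}
    (hA : A.PosSemidef) : ∃ c : n → EuclideanSpace 𝕜 n, gram 𝕜 c = A := by
  classical
  obtain ⟨B, rfl⟩ : ∃ B : Matrix n n 𝕜, A = Bᴴ * B := by
    open scoped MatrixOrder in
    exact CStarAlgebra.nonneg_iff_eq_star_mul_self.mp hA.nonneg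
  refine ⟨fun i => WithLp.toLp 2 (fun r => B r i), ?_⟩
  ext i j
  simp [gram_apply, PiLp.inner_apply, Matrix.mul_apply, mul_comm]

theorem Matrix.rank_rectVandermonde_one {K : Type*} [Field K] {m N : ℕ} {ζ : Fin m → K}
    (hζ : Function.Injective ζ) (hmN : m ≤ N) : (rectVandermonde ζ 1 N).rank = m := by
  refine le_antisymm (rank_le_height _) ?_
  have hsub : (rectVandermonde ζ 1 N).submatrix id (Fin.castLE hmN) = vandermonde ζ := by
    ext k n
    simp [rectVandermonde_apply]
  have hdet : IsUnit (vandermonde ζ).det := (det_vandermonde_ne_zero_iff.mpr hζ).isUnit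
  calc m = (vandermonde ζ).rank := by
        rw [rank_of_isUnit _ ((isUnit_iff_isUnit_det _).mpr hdet), Fintype.card_fin]
    _ ≤ (rectVandermonde ζ 1 N).rank := hsub ▸ rank_submatrix_le _ _ _

theorem Matrix.rank_conjTranspose_mul_diagonal_mul {ι κ : Type*} [Fintype ι] [DecidableEq ι]
    [Fintype κ] {d : ι → ℝ} (hd : ∀ k, 0 < d k) (V : Matrix ι κ ℂ) :
    (Vᴴ * diagonal (fun k => (d k : ℂ)) * V).rank = V.rank := by
  let S : Matrix ι ι ℂ := diagonal fun k => (√(d k) : ℂ)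
  have hS : diagonal (fun k => (d k : ℂ)) = Sᴴ * S := by
    rw [diagonal_conjTranspose, diagonal_mul_diagonal]
    congr 1
    ext k
    simp [← Complex.ofReal_mul, Real.mul_self_sqrt (hd k).le]
  have hdet : S.det ≠ 0 := by
    simp [S, det_diagonal, Finset.prod_ne_zero_iff, Real.sqrt_ne_zero'.mpr (hd _)]
  rw [hS, ← Matrix.mul_assoc Vᴴ, ← conjTranspose_mul, Matrix.mul_assoc,
    rank_conjTranspose_mul_self, rank_mul_eq_right_of_det_ne_zero _ _ hdet]

theorem toepMat_zero_left {n : ℕ} (u : Fin (n + 1) → ℂ) (i : Fin (n + 1)) :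
    ToepMat (n + 1) u 0 i = u i := by
  simp [ToepMat]

theorem toepMat_succ_succ {n : ℕ} (u : Fin (n + 1) → ℂ) (i j : Fin n) :
    ToepMat (n + 1) u i.succ j.succ = ToepMat (n + 1) u i.castSucc j.castSucc := by
  simp [ToepMat, Nat.add_sub_add_right]

theorem toepMat_apply_eq_sum {N m : ℕ} {u : Fin N → ℂ} {ζ : Fin m → ℂ} {d : Fin m → ℝ}
    (hζ : ∀ k, ‖ζ k‖ = 1) (hu : ∀ n : Fin N, u n = ∑ k, (d k : ℂ) * ζ k ^ (n : ℕ))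
    (i j : Fin N) : ToepMat N u i j = ∑ k, (d k : ℂ) * conj (ζ k ^ (i : ℕ)) * ζ k ^ (j : ℕ) := by
  unfold ToepMat
  split_ifs with h
  · simp only [hu, mul_assoc, Complex.conj_pow_mul_pow_of_le (hζ _) h]
  · simp only [hu, map_sum, map_mul, Complex.conj_ofReal, mul_assoc,
      Complex.conj_pow_mul_pow_of_ge (hζ _) (le_of_not_ge h)]

theorem toepMat_eq_rectVandermonde {N m : ℕ} {u : Fin N → ℂ} {ζ : Fin m → ℂ} {d : Fin m → ℝ}
    (hζ : ∀ k, ‖ζ k‖ = 1) (hu : ∀ n : Fin N, u n = ∑ k, (d k : ℂ) * ζ k ^ (n : ℕ)) :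
    ToepMat N u =
      (rectVandermonde ζ 1 N)ᴴ * diagonal (fun k => (d k : ℂ)) * rectVandermonde ζ 1 N := by
  ext i j
  rw [toepMat_apply_eq_sum hζ hu, mul_apply]
  simp [mul_diagonal, rectVandermonde_apply, mul_comm]

/-- Carathéodory–Fejér. -/
theorem exists_eq_sum_pow_of_toepMat_posSemidef {N : ℕ} {u : Fin N → ℂ}
    (hu : (ToepMat N u).PosSemidef) :
    ∃ (m : ℕ) (ζ : Fin m → ℂ) (d : Fin m → ℝ), m ≤ N ∧ Function.Injective ζ ∧
      (∀ k, ‖ζ k‖ = 1) ∧ (∀ k, 0 < d k) ∧ ∀ n : Fin N, u n = ∑ k, (d k : ℂ) * ζ k ^ (n : ℕ) := by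
  cases N with
  | zero => exact ⟨0, finZeroElim, finZeroElim, le_rfl, Function.injective_of_subsingleton _,
      finZeroElim, finZeroElim, finZeroElim⟩
  | succ N =>
    obtain ⟨c, hc⟩ := hu.exists_gram_eq
    -- shift invariance of `ToepMat` makes `c i ↦ c (i + 1)` isometric
    obtain ⟨S, hS⟩ := LinearIsometry.exists_iterate_apply_eq_of_gram_eq c (by
      ext i j
      simpa [← hc, gram_apply] using (toepMat_succ_succ u i j).symm)
    obtain ⟨m, ζ, d, hm, hζ, hζ1, hd, hsum⟩ := S.exists_inner_iterate_eq_sum (c 0)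
    refine ⟨m, ζ, d, by simpa using hm, hζ, hζ1, hd, fun n => ?_⟩
    rw [← toepMat_zero_left u n, ← hc, gram_apply, ← hS n, hsum]

theorem stmt6_general (N : ℕ) (N_u : ℕ) (U : Fin N_u → Fin N)
    (u : Fin N → ℂ) (hPSD : (ToepMat N u).PosSemidef)
    (K : ℕ) (hK : K = (ToepMat N u).rank) :
    ∃ (z : Fin K → ℂ) (d : Fin K → ℝ),
      Function.Injective z ∧ (∀ k, ‖z k‖ = 1) ∧ (∀ k, 0 < d k) ∧
      ∀ i j, Tirr N N_u U u i j =
        ∑ k, (d k : ℂ) * (z k ^ ((U i) : ℕ)) * (starRingEnd ℂ) (z k ^ ((U j) : ℕ)) := by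
  obtain ⟨m, ζ, d, hmN, hζ, hζ1, hd, hu⟩ := exists_eq_sum_pow_of_toepMat_posSemidef hPSD
  obtain rfl : m = K := by
    rw [hK, toepMat_eq_rectVandermonde hζ1 hu, rank_conjTranspose_mul_diagonal_mul hd,
      rank_rectVandermonde_one hζ hmN]
  refine ⟨fun k => conj (ζ k), d, (RingHom.injective _).comp hζ, by simpa using hζ1, hd,
    fun i j => ?_⟩
  simp only [Tirr, toepMat_apply_eq_sum hζ1 hu, map_pow, Complex.conj_conj]

/-- Existence of the irregular Vandermonde decomposition: with
`U = {m·f : m ∈ M, f ∈ F}` listed increasingly and `Toep(u) ⪰ 0` of rank `K`,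
`T(u)` is an `(N_u, K)`-irregular Toeplitz matrix:
`T(u) = W(γ,z)·diag(d)·W(γ,z)ᴴ` for distinct unimodular `z_1,…,z_K` and `d_k > 0`,
where `γ = (U_1,…,U_{N_u})`. -/
theorem stmt6 (N_M N_F : ℕ) (hM : 1 ≤ N_M) (hF : 1 ≤ N_F)
    (M F : Finset ℕ) (hMsub : ∀ m ∈ M, m ≤ N_M - 1) (hFsub : ∀ f ∈ F, 1 ≤ f ∧ f ≤ N_F)
    (N : ℕ) (hN : N = N_F * (N_M - 1) + 1)
    (N_u : ℕ) (U : Fin N_u → Fin N) (hUmono : StrictMono U)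
    (hUset : ∀ n : Fin N, (∃ i, U i = n) ↔ ∃ m ∈ M, ∃ f ∈ F, m * f = (n : ℕ))
    (u : Fin N → ℂ) (hPSD : (ToepMat N u).PosSemidef)
    (K : ℕ) (hK : K = (ToepMat N u).rank) :
    ∃ (z : Fin K → ℂ) (d : Fin K → ℝ),
      Function.Injective z ∧ (∀ k, ‖z k‖ = 1) ∧ (∀ k, 0 < d k) ∧
      ∀ i j, Tirr N N_u U u i j =
        ∑ k, (d k : ℂ) * (z k ^ ((U i) : ℕ)) * (starRingEnd ℂ) (z k ^ ((U j) : ℕ)) :=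
  stmt6_general N N_u U u hPSD K hK
end
end

section
/- Let N be a positive integer and let T ∈ ℂ^{N×N} be a positive semidefinite Hermitian Toeplitz matrix (i.e., T = Toep(u) for some u ∈ ℂ^N) with rank K. Then T admits a Vandermonde decomposition: there exist distinct z_1,…,z_K ∈ ℂ with |z_k| = 1 and positive reals d_1,…,d_K such that T = ∑_{k=1}^K d_k · v_N(z_k) · v_N(z_k)^H. -/
open Matrix BigOperators
open scoped ComplexOrder

noncomputable section

/-!
Read a vector `x ∈ ℂ^N` as the polynomial `∑ xᵢ Xⁱ`. For a Toeplitz matrix `T` the quadratic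
form `xᴴ T x` does not change when `x` is multiplied by `X` (while the degree stays below `N`),
nor when a linear factor `X - z` of `x` is replaced by `1 - z̄ X`. If `T` is positive
semidefinite, `ker T` is the zero set of this form, so the kernel polynomials are exactly the
multiples of degree `< N` of a kernel polynomial `a` of least degree, and the second invariance
shows that every root `z` of `a` has `|z| = 1`. Hence `v = v_N(z̄)` is orthogonal to `ker T`, so
`v = T w` for some `w` as `T` is Hermitian, and `T - (wᴴ T w)⁻¹ v vᴴ` is again a positive
semidefinite Toeplitz matrix, of rank one less, whose range does not contain `v`. Induction on
the rank gives the decomposition, with distinct nodes because each later node lies in the range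
of the deflated matrix.
-/

open Polynomial

namespace Matrix

theorem rank_add_le {m n K : Type*} [Fintype n] [Field K] (A B : Matrix m n K) :
    (A + B).rank ≤ A.rank + B.rank := by
  unfold rank
  rw [mulVecLin_add]
  exact (Submodule.finrank_mono (LinearMap.range_add_le _ _)).trans
    (Submodule.finrank_add_le_finrank_add_finrank _ _)

theorem eq_zero_of_rank_eq_zero {m n K : Type*} [Fintype n] [Field K] {A : Matrix m n K}
    (hA : A.rank = 0) : A = 0 := by
  refine mulVec_injective (funext fun x => ?_)
  have hx : A.mulVecLin x ∈ LinearMap.range A.mulVecLin := LinearMap.mem_range_self _ x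
  rw [Submodule.finrank_eq_zero.mp hA, Submodule.mem_bot] at hx
  simpa using hx

theorem IsHermitian.star_dotProduct_mulVec {n α : Type*} [Fintype n] [CommSemiring α]
    [StarRing α] {A : Matrix n n α} (hA : A.IsHermitian) (x y : n → α) :
    star x ⬝ᵥ A *ᵥ y = star (star y ⬝ᵥ A *ᵥ x) := by
  rw [star_dotProduct, star_mulVec, hA.eq, ← dotProduct_mulVec]

theorem IsHermitian.mem_range_mulVecLin {n 𝕜 : Type*} [Fintype n] [DecidableEq n] [RCLike 𝕜]
    {A : Matrix n n 𝕜} (hA : A.IsHermitian) {v : n → 𝕜}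
    (hv : ∀ x, A *ᵥ x = 0 → star x ⬝ᵥ v = 0) : v ∈ LinearMap.range A.mulVecLin := by
  have hsymm := isSymmetric_toEuclideanLin_iff.mpr hA
  have hv' : WithLp.toLp 2 v ∈ LinearMap.range A.toEuclideanLin := by
    rw [← Submodule.orthogonal_orthogonal (LinearMap.range _), hsymm.orthogonal_range]
    intro x hx
    rw [EuclideanSpace.inner_eq_star_dotProduct, dotProduct_comm]
    exact hv _ (by simpa [toLpLin_apply] using hx)
  obtain ⟨y, hy⟩ := hv'
  exact ⟨y.ofLp, by simpa [toLpLin_apply] using congrArg WithLp.ofLp hy⟩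

theorem dotProduct_mulVec_sub_smul_swap {n R : Type*} [Fintype n] [CommRing R] [StarRing R]
    (M : Matrix n n R) {x y : n → R} (z : R) (h : star x ⬝ᵥ M *ᵥ x = star y ⬝ᵥ M *ᵥ y) :
    star (x - z • y) ⬝ᵥ M *ᵥ (x - z • y) = star (y - star z • x) ⬝ᵥ M *ᵥ (y - star z • x) := by
  simp only [star_sub, star_smul, star_star, mulVec_sub, mulVec_smul, sub_dotProduct,
    dotProduct_sub, smul_dotProduct, dotProduct_smul, smul_eq_mul]
  linear_combination (1 - star z * z) * h

section Deflation

variable {n 𝕜 : Type*} [Fintype n] [RCLike 𝕜] {T : Matrix n n 𝕜} {v w : n → 𝕜} {d : ℝ}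

theorem PosSemidef.exists_pos_mul_dotProduct_eq_one (hT : T.PosSemidef) (hv : T *ᵥ w = v)
    (hv0 : v ≠ 0) : ∃ d : ℝ, 0 < d ∧ (d : 𝕜) * (star w ⬝ᵥ v) = 1 := by
  obtain ⟨c, hc, hcv⟩ : ∃ c > (0 : ℝ), (c : 𝕜) = star w ⬝ᵥ v := by
    refine RCLike.pos_iff_exists_ofReal.mp (lt_of_le_of_ne (hv ▸ hT.dotProduct_mulVec_nonneg w) ?_)
    exact fun h => hv0 (hv ▸ (hT.dotProduct_mulVec_zero_iff w).mp (hv ▸ h.symm))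
  refine ⟨c⁻¹, inv_pos.mpr hc, ?_⟩
  rw [← hcv, ← RCLike.ofReal_mul, inv_mul_cancel₀ hc.ne', RCLike.ofReal_one]

theorem sub_smul_vecMulVec_mulVec (hv : T *ᵥ w = v) (x : n → 𝕜) :
    (T - d • vecMulVec v (star v)) *ᵥ x = T *ᵥ (x - ((d : 𝕜) * (star v ⬝ᵥ x)) • w) := by
  rw [sub_mulVec, mulVec_sub, mulVec_smul, hv, smul_mulVec, vecMulVec_mulVec, op_smul_eq_smul,
    ← smul_assoc, RCLike.real_smul_eq_coe_mul]

theorem sub_smul_vecMulVec_mulVec_self (hT : T.IsHermitian) (hv : T *ᵥ w = v)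
    (hd : (d : 𝕜) * (star w ⬝ᵥ v) = 1) : (T - d • vecMulVec v (star v)) *ᵥ w = 0 := by
  have hreal : star v ⬝ᵥ w = star w ⬝ᵥ v := by
    rw [star_dotProduct, ← hv, ← hT.star_dotProduct_mulVec]
  rw [sub_smul_vecMulVec_mulVec hv, hreal, hd, one_smul, sub_self, mulVec_zero]

theorem IsHermitian.sub_smul_vecMulVec (hT : T.IsHermitian) (d : ℝ) (v : n → 𝕜) :
    (T - d • vecMulVec v (star v)).IsHermitian :=
  hT.sub ((posSemidef_vecMulVec_self_star v).1.smul (IsSelfAdjoint.all d))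

theorem PosSemidef.sub_smul_vecMulVec (hT : T.PosSemidef) (hv : T *ᵥ w = v)
    (hd : (d : 𝕜) * (star w ⬝ᵥ v) = 1) : (T - d • vecMulVec v (star v)).PosSemidef := by
  have hT' := hT.1.sub_smul_vecMulVec d v
  refine .of_dotProduct_mulVec_nonneg hT' fun x => ?_
  set c : 𝕜 := d * (star v ⬝ᵥ x)
  have hw : star w ⬝ᵥ (T - d • vecMulVec v (star v)) *ᵥ x = 0 := by
    rw [hT'.star_dotProduct_mulVec, sub_smul_vecMulVec_mulVec_self hT.1 hv hd, dotProduct_zero,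
      star_zero]
  have hquad : star x ⬝ᵥ (T - d • vecMulVec v (star v)) *ᵥ x =
      star (x - c • w) ⬝ᵥ T *ᵥ (x - c • w) := by
    rw [← sub_smul_vecMulVec_mulVec hv, star_sub, star_smul, sub_dotProduct, smul_dotProduct, hw,
      smul_zero, sub_zero]
  exact hquad ▸ hT.dotProduct_mulVec_nonneg _

theorem range_sub_smul_vecMulVec_le (hv : T *ᵥ w = v) :
    LinearMap.range (T - d • vecMulVec v (star v)).mulVecLin ≤ LinearMap.range T.mulVecLin := by
  rintro _ ⟨x, rfl⟩
  exact ⟨_, (sub_smul_vecMulVec_mulVec hv x).symm⟩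

theorem notMem_range_sub_smul_vecMulVec (hT : T.IsHermitian) (hv : T *ᵥ w = v)
    (hd : (d : 𝕜) * (star w ⬝ᵥ v) = 1) :
    v ∉ LinearMap.range (T - d • vecMulVec v (star v)).mulVecLin := by
  rintro ⟨y, hy⟩
  have hwv : star w ⬝ᵥ v = 0 := by
    rw [← hy, mulVecLin_apply, (hT.sub_smul_vecMulVec d v).star_dotProduct_mulVec,
      sub_smul_vecMulVec_mulVec_self hT hv hd, dotProduct_zero, star_zero]
  simp [hwv] at hd

theorem rank_sub_smul_vecMulVec_add_one (hT : T.IsHermitian) (hv : T *ᵥ w = v)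
    (hd : (d : 𝕜) * (star w ⬝ᵥ v) = 1) :
    (T - d • vecMulVec v (star v)).rank + 1 = T.rank := by
  have hlt : (T - d • vecMulVec v (star v)).rank < T.rank := by
    refine Submodule.finrank_lt_finrank_of_lt ((range_sub_smul_vecMulVec_le hv).lt_of_ne ?_)
    intro h
    exact notMem_range_sub_smul_vecMulVec hT hv hd (h ▸ ⟨w, hv⟩)
  have hle : T.rank ≤ (T - d • vecMulVec v (star v)).rank + 1 :=
    calc T.rank = (T - d • vecMulVec v (star v) + vecMulVec (d • v) (star v)).rank := by
          rw [smul_vecMulVec, sub_add_cancel]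
      _ ≤ (T - d • vecMulVec v (star v)).rank + (vecMulVec (d • v) (star v)).rank :=
          rank_add_le _ _
      _ ≤ (T - d • vecMulVec v (star v)).rank + 1 := by
          gcongr
          exact rank_vecMulVec_le _ _
  omega

end Deflation

end Matrix

section ShiftInvariant

variable {R : Type*} [CommSemiring R] {N : ℕ} {W : Submodule R R[X]}

theorem Submodule.exists_minimal_natDegree {p : R[X]} (hp : p ∈ W) (hp0 : p ≠ 0) :
    ∃ a ∈ W, a ≠ 0 ∧ ∀ q ∈ W, q ≠ 0 → a.natDegree ≤ q.natDegree := by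
  classical
  have hex : ∃ m, ∃ a ∈ W, a ≠ 0 ∧ a.natDegree = m := ⟨_, p, hp, hp0, rfl⟩
  obtain ⟨a, ha, ha0, hm⟩ := Nat.find_spec hex
  exact ⟨a, ha, ha0, fun q hq hq0 => hm ▸ Nat.find_min' hex ⟨q, hq, hq0, rfl⟩⟩

theorem X_pow_mul_mem_of_X_mul_mem (hX : ∀ p ∈ W, X * p ∈ degreeLT R N → X * p ∈ W)
    {a : R[X]} (ha : a ∈ W) : ∀ j, j + a.natDegree < N → X ^ j * a ∈ W
  | 0, _ => by simpa using ha
  | j + 1, hj => by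
    have hdeg : X * (X ^ j * a) ∈ degreeLT R N := by
      have hnat : (X ^ (j + 1) * a).natDegree < N :=
        natDegree_mul_le.trans_lt (by have := natDegree_X_pow_le (R := R) (j + 1); omega)
      rw [← mul_assoc, ← pow_succ', mem_degreeLT]
      exact degree_le_natDegree.trans_lt (by exact_mod_cast hnat)
    rw [pow_succ', mul_assoc]
    exact hX _ (X_pow_mul_mem_of_X_mul_mem hX ha j (by omega)) hdeg

theorem mul_mem_of_X_mul_mem [NoZeroDivisors R]
    (hX : ∀ p ∈ W, X * p ∈ degreeLT R N → X * p ∈ W)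
    {a q : R[X]} (ha : a ∈ W) (hdeg : a * q ∈ degreeLT R N) : a * q ∈ W := by
  rcases eq_or_ne a 0 with rfl | ha0
  · simp
  rcases eq_or_ne q 0 with rfl | hq0
  · simp
  have hnat : a.natDegree + q.natDegree < N := by
    rw [← natDegree_mul ha0 hq0]
    exact (natDegree_lt_iff_degree_lt (mul_ne_zero ha0 hq0)).mpr (mem_degreeLT.mp hdeg)
  rw [q.as_sum_range_C_mul_X_pow, Finset.mul_sum]
  refine W.sum_mem fun j hj => ?_
  rw [Finset.mem_range] at hj
  rw [mul_left_comm, mul_comm a, C_mul']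
  exact W.smul_mem _ (X_pow_mul_mem_of_X_mul_mem hX ha j (by omega))

end ShiftInvariant

theorem dvd_of_mem_of_X_mul_mem {K : Type*} [Field K] {N : ℕ} {W : Submodule K K[X]}
    (hW : W ≤ degreeLT K N)
    (hX : ∀ p ∈ W, X * p ∈ degreeLT K N → X * p ∈ W) {a p : K[X]} (ha : a ∈ W)
    (ha0 : a ≠ 0) (hmin : ∀ q ∈ W, q ≠ 0 → a.natDegree ≤ q.natDegree) (hp : p ∈ W) :
    a ∣ p := by
  have hmod_lt : (p % a).degree < a.degree := EuclideanDomain.mod_lt p ha0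
  have hdiv : a * (p / a) ∈ W := by
    refine mul_mem_of_X_mul_mem hX ha ?_
    rw [eq_sub_of_add_eq (EuclideanDomain.div_add_mod p a), mem_degreeLT]
    exact (degree_sub_le _ _).trans_lt
      (max_lt (mem_degreeLT.mp (hW hp)) (hmod_lt.trans (mem_degreeLT.mp (hW ha))))
  rw [← EuclideanDomain.mod_eq_zero]
  by_contra hmod
  have hmem : p % a ∈ W := by
    rw [EuclideanDomain.mod_eq_sub_mul_div]
    exact W.sub_mem hp hdiv
  exact (natDegree_lt_natDegree hmod hmod_lt).not_ge (hmin _ hmem hmod)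

def coeffVec (R : Type*) [Semiring R] (N : ℕ) : R[X] →ₗ[R] Fin N → R :=
  LinearMap.pi fun i => lcoeff R i

@[simp] theorem coeffVec_apply {R : Type*} [Semiring R] {N : ℕ} (p : R[X]) (i : Fin N) :
    coeffVec R N p i = p.coeff i :=
  rfl

theorem coeffVec_degreeLTEquiv_symm {R : Type*} [Semiring R] {N : ℕ} (x : Fin N → R) :
    coeffVec R N ((degreeLTEquiv R N).symm x) = x :=
  (degreeLTEquiv R N).apply_symm_apply x

theorem eval_eq_coeffVec_dotProduct_vN {N : ℕ} {p : ℂ[X]} (hp : p ∈ degreeLT ℂ N) (z : ℂ) :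
    p.eval z = coeffVec ℂ N p ⬝ᵥ vN N z :=
  eval_eq_sum_degreeLTEquiv hp z

theorem star_vN (N : ℕ) (z : ℂ) : star (vN N z) = vN N (star z) := by
  ext i
  simp [vN]

def Matrix.IsToeplitz {R : Type*} {N : ℕ} (T : Matrix (Fin N) (Fin N) R) : Prop :=
  ∀ i j i' j' : Fin N, (i : ℕ) + j' = i' + j → T i j = T i' j'

theorem isToeplitz_toepMat (N : ℕ) (u : Fin N → ℂ) : (ToepMat N u).IsToeplitz := by
  intro i j i' j' h
  unfold ToepMat
  split_ifs
  · congr 2; omega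
  · omega
  · omega
  · congr 3; omega

theorem isToeplitz_vecMulVec_vN {N : ℕ} {z : ℂ} (hz : ‖z‖ = 1) :
    (vecMulVec (vN N z) (star (vN N z))).IsToeplitz := by
  have hz0 : z ≠ 0 := by
    rintro rfl
    simp at hz
  have hentry : ∀ i j : Fin N, vecMulVec (vN N z) (star (vN N z)) i j = z ^ ((i : ℤ) - j) := by
    intro i j
    rw [vecMulVec_apply, Pi.star_apply, vN, vN, star_pow, Complex.star_def,
      ← Complex.inv_eq_conj hz, zpow_sub₀ hz0, inv_pow, zpow_natCast, zpow_natCast, div_eq_mul_inv]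
  intro i j i' j' h
  rw [hentry, hentry]
  congr 1
  omega

namespace Matrix.IsToeplitz

variable {R : Type*} {N : ℕ} {T S : Matrix (Fin N) (Fin N) R}

theorem sub [Sub R] (hT : T.IsToeplitz) (hS : S.IsToeplitz) : (T - S).IsToeplitz :=
  fun i j i' j' h => by simp only [sub_apply, hT i j i' j' h, hS i j i' j' h]

theorem smul {α : Type*} [SMul α R] (c : α) (hT : T.IsToeplitz) : (c • T).IsToeplitz :=
  fun i j i' j' h => by simp only [smul_apply, hT i j i' j' h]

theorem dotProduct_mulVec_coeffVec_X_mul [CommSemiring R] [StarRing R] (hT : T.IsToeplitz)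
    {p : R[X]} (hp : X * p ∈ degreeLT R N) :
    star (coeffVec R N (X * p)) ⬝ᵥ T *ᵥ coeffVec R N (X * p) =
      star (coeffVec R N p) ⬝ᵥ T *ᵥ coeffVec R N p := by
  cases N with
  | zero => simp
  | succ n =>
    have hpn : p.coeff n = 0 := by
      rw [← coeff_X_mul]
      exact coeff_eq_zero_of_degree_lt (mem_degreeLT.mp hp)
    have hshift : ∀ i j : Fin n, T i.succ j.succ = T i.castSucc j.castSucc :=
      fun i j => hT _ _ _ _ (by simp only [Fin.val_succ, Fin.val_castSucc]; omega)
    simp only [dotProduct, mulVec]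
    conv_lhs => simp only [Fin.sum_univ_succ (n := n)]
    conv_rhs => simp only [Fin.sum_univ_castSucc (n := n)]
    simp [coeff_X_mul, hpn, hshift]

end Matrix.IsToeplitz

def Matrix.polyKer {N : ℕ} (T : Matrix (Fin N) (Fin N) ℂ) : Submodule ℂ ℂ[X] :=
  degreeLT ℂ N ⊓ LinearMap.ker (T.mulVecLin ∘ₗ coeffVec ℂ N)

theorem Matrix.mem_polyKer {N : ℕ} {T : Matrix (Fin N) (Fin N) ℂ} {p : ℂ[X]} :
    p ∈ T.polyKer ↔ p ∈ degreeLT ℂ N ∧ T *ᵥ coeffVec ℂ N p = 0 :=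
  Iff.rfl

theorem Matrix.degreeLTEquiv_symm_mem_polyKer {N : ℕ} {T : Matrix (Fin N) (Fin N) ℂ}
    {x : Fin N → ℂ} (hx : T *ᵥ x = 0) : ((degreeLTEquiv ℂ N).symm x : ℂ[X]) ∈ T.polyKer :=
  mem_polyKer.mpr ⟨Subtype.prop _, by rwa [coeffVec_degreeLTEquiv_symm]⟩

namespace Matrix.IsToeplitz

variable {N : ℕ} {T : Matrix (Fin N) (Fin N) ℂ}

theorem X_mul_mem_polyKer (hT : T.IsToeplitz) (hPSD : T.PosSemidef) {p : ℂ[X]}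
    (hp : p ∈ T.polyKer) (hdeg : X * p ∈ degreeLT ℂ N) : X * p ∈ T.polyKer := by
  rw [mem_polyKer] at hp ⊢
  refine ⟨hdeg, (hPSD.dotProduct_mulVec_zero_iff _).mp ?_⟩
  rw [hT.dotProduct_mulVec_coeffVec_X_mul hdeg, hp.2, dotProduct_zero]

theorem dvd_of_mem_polyKer (hT : T.IsToeplitz) (hPSD : T.PosSemidef) {a p : ℂ[X]}
    (ha : a ∈ T.polyKer) (ha0 : a ≠ 0)
    (hmin : ∀ q ∈ T.polyKer, q ≠ 0 → a.natDegree ≤ q.natDegree) (hp : p ∈ T.polyKer) : a ∣ p :=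
  dvd_of_mem_of_X_mul_mem inf_le_left (fun _ => hT.X_mul_mem_polyKer hPSD) ha ha0 hmin hp

theorem eq_zero_of_C_mem_polyKer (hT : T.IsToeplitz) (hPSD : T.PosSemidef) {c : ℂ} (hc : c ≠ 0)
    (hC : C c ∈ T.polyKer) : T = 0 := by
  refine mulVec_injective (funext fun x => ?_)
  set p : ℂ[X] := ((degreeLTEquiv ℂ N).symm x : ℂ[X])
  have hp : C c * (C c⁻¹ * p) = p := by
    rw [← mul_assoc, ← C_mul, mul_inv_cancel₀ hc, C_1, one_mul]
  have hmem := mul_mem_of_X_mul_mem (q := C c⁻¹ * p) (fun _ => hT.X_mul_mem_polyKer hPSD) hC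
    (by rw [hp]; exact Subtype.prop _)
  rw [hp] at hmem
  rw [← coeffVec_degreeLTEquiv_symm x, (mem_polyKer.mp hmem).2, zero_mulVec]

theorem norm_eq_one_of_isRoot (hT : T.IsToeplitz) (hPSD : T.PosSemidef) {a : ℂ[X]}
    (ha : a ∈ T.polyKer) (ha0 : a ≠ 0)
    (hmin : ∀ q ∈ T.polyKer, q ≠ 0 → a.natDegree ≤ q.natDegree) {z : ℂ} (hz : a.IsRoot z) :
    ‖z‖ = 1 := by
  obtain ⟨g, rfl⟩ := dvd_iff_isRoot.mpr hz
  have hg0 : g ≠ 0 := right_ne_zero_of_mul ha0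
  obtain ⟨ha_deg, ha_ker⟩ := mem_polyKer.mp ha
  have hXg : X * g ∈ degreeLT ℂ N := by
    rw [mem_degreeLT] at ha_deg ⊢
    rwa [degree_mul, degree_X, ← degree_X_sub_C z, ← degree_mul]
  have hg : g ∈ degreeLT ℂ N :=
    mem_degreeLT.mpr ((degree_le_of_dvd (dvd_mul_left g _) ha0).trans_lt (mem_degreeLT.mp ha_deg))
  have hvec : coeffVec ℂ N ((X - C z) * g) = coeffVec ℂ N (X * g) - z • coeffVec ℂ N g := by
    rw [sub_mul, C_mul', map_sub, map_smul]
  have hvec' : coeffVec ℂ N ((1 - C (star z) * X) * g) =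
      coeffVec ℂ N g - star z • coeffVec ℂ N (X * g) := by
    rw [sub_mul, one_mul, mul_assoc, C_mul', map_sub, map_smul]
  have hmem' : (1 - C (star z) * X) * g ∈ T.polyKer := by
    refine mem_polyKer.mpr ⟨?_, (hPSD.dotProduct_mulVec_zero_iff _).mp ?_⟩
    · rw [sub_mul, one_mul, mul_assoc, C_mul']
      exact Submodule.sub_mem _ hg (Submodule.smul_mem _ _ hXg)
    · rw [hvec', ← dotProduct_mulVec_sub_smul_swap T z (hT.dotProduct_mulVec_coeffVec_X_mul hXg),
        ← hvec, ha_ker, dotProduct_zero]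
  have hroot := hT.dvd_of_mem_polyKer hPSD ha ha0 hmin hmem'
  rw [mul_dvd_mul_iff_right hg0, dvd_iff_isRoot] at hroot
  simp only [IsRoot, eval_mul, eval_sub, eval_one, eval_C, eval_X, Complex.star_def,
    Complex.conj_mul'] at hroot
  have hnorm : ((‖z‖ ^ 2 : ℝ) : ℂ) = 1 := by
    push_cast
    linear_combination -hroot
  exact (pow_eq_one_iff_of_nonneg (norm_nonneg z) two_ne_zero).mp (by exact_mod_cast hnorm)

theorem exists_norm_eq_one_vN_mem_range_of_rank_lt (hT : T.IsToeplitz) (hPSD : T.PosSemidef)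
    (hrank0 : T.rank ≠ 0) (hrankN : T.rank < N) :
    ∃ z : ℂ, ‖z‖ = 1 ∧ vN N z ∈ LinearMap.range T.mulVecLin := by
  obtain ⟨x, hx, hx0⟩ : ∃ x, T *ᵥ x = 0 ∧ x ≠ 0 := by
    by_contra! h
    have hinj : Function.Injective T.mulVecLin :=
      LinearMap.ker_eq_bot.mp (LinearMap.ker_eq_bot'.mpr h)
    have hfull := LinearMap.finrank_range_of_inj hinj
    rw [Module.finrank_fin_fun] at hfull
    exact hrankN.ne hfull
  obtain ⟨a, ha, ha0, hmin⟩ :=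
    Submodule.exists_minimal_natDegree (degreeLTEquiv_symm_mem_polyKer hx) (by simpa using hx0)
  have hdeg : 0 < a.degree := by
    rw [← natDegree_pos_iff_degree_pos, Nat.pos_iff_ne_zero]
    intro h0
    rw [eq_C_of_natDegree_eq_zero h0] at ha ha0
    exact hrank0 (by rw [hT.eq_zero_of_C_mem_polyKer hPSD (by simpa using ha0) ha, rank_zero])
  obtain ⟨z, hz⟩ := Complex.exists_root hdeg
  refine ⟨star z, by simpa using hT.norm_eq_one_of_isRoot hPSD ha ha0 hmin hz,
    hPSD.1.mem_range_mulVecLin fun x hx => ?_⟩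
  have hp := degreeLTEquiv_symm_mem_polyKer hx
  have heval := eval_eq_coeffVec_dotProduct_vN (mem_polyKer.mp hp).1 z
  rw [eval_eq_zero_of_dvd_of_eval_eq_zero (hT.dvd_of_mem_polyKer hPSD ha ha0 hmin hp) hz,
    coeffVec_degreeLTEquiv_symm] at heval
  rw [← star_vN, star_dotProduct_star, dotProduct_comm, ← heval, star_zero]

theorem exists_norm_eq_one_vN_mem_range (hT : T.IsToeplitz) (hPSD : T.PosSemidef)
    (hrank0 : T.rank ≠ 0) : ∃ z : ℂ, ‖z‖ = 1 ∧ vN N z ∈ LinearMap.range T.mulVecLin := by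
  rcases (rank_le_width T).lt_or_eq with hlt | heq
  · exact hT.exists_norm_eq_one_vN_mem_range_of_rank_lt hPSD hrank0 hlt
  · refine ⟨1, norm_one, ?_⟩
    have htop : LinearMap.range T.mulVecLin = ⊤ :=
      Submodule.eq_top_of_finrank_eq (by rw [Module.finrank_fin_fun]; exact heq)
    exact htop ▸ Submodule.mem_top

theorem exists_vandermonde_decomposition {K : ℕ} (hT : T.IsToeplitz) (hPSD : T.PosSemidef)
    (hK : T.rank = K) :
    ∃ (z : Fin K → ℂ) (d : Fin K → ℝ),
      Function.Injective z ∧ (∀ k, ‖z k‖ = 1) ∧ (∀ k, 0 < d k) ∧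
      (∀ k, vN N (z k) ∈ LinearMap.range T.mulVecLin) ∧
      T = ∑ k, d k • vecMulVec (vN N (z k)) (star (vN N (z k))) := by
  induction K generalizing T with
  | zero =>
    refine ⟨Fin.elim0, Fin.elim0, fun k => k.elim0, fun k => k.elim0, fun k => k.elim0,
      fun k => k.elim0, ?_⟩
    simp [eq_zero_of_rank_eq_zero hK]
  | succ K ih =>
    obtain ⟨z₀, hz₀, w, hw⟩ := hT.exists_norm_eq_one_vN_mem_range hPSD (by omega)
    replace hw : T *ᵥ w = vN N z₀ := hw
    have hN : 0 < N := by
      have := rank_le_width T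
      omega
    have hv0 : vN N z₀ ≠ 0 := fun h => by simpa [vN] using congrFun h ⟨0, hN⟩
    obtain ⟨d₀, hd₀, hd⟩ := hPSD.exists_pos_mul_dotProduct_eq_one hw hv0
    obtain ⟨z, d, hinj, hnorm, hpos, hmem, hsum⟩ :=
      ih (hT.sub ((isToeplitz_vecMulVec_vN hz₀).smul d₀)) (hPSD.sub_smul_vecMulVec hw hd)
        (by have := rank_sub_smul_vecMulVec_add_one hPSD.1 hw hd; omega)
    refine ⟨Fin.cons z₀ z, Fin.cons d₀ d, ?_, Fin.cases hz₀ hnorm, Fin.cases hd₀ hpos,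
      Fin.cases ⟨w, hw⟩ fun k => range_sub_smul_vecMulVec_le hw (hmem k), ?_⟩
    · refine Fin.cons_injective_iff.mpr ⟨?_, hinj⟩
      rintro ⟨k, hk⟩
      exact notMem_range_sub_smul_vecMulVec hPSD.1 hw hd (hk ▸ hmem k)
    · rw [Fin.sum_univ_succ]
      simp only [Fin.cons_zero, Fin.cons_succ, ← hsum, add_sub_cancel]

end Matrix.IsToeplitz

theorem stmt7_general (N : ℕ) (u : Fin N → ℂ)
    (T : Matrix (Fin N) (Fin N) ℂ) (hT : T = ToepMat N u)
    (hPSD : T.PosSemidef) (K : ℕ) (hK : K = T.rank) :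
    ∃ (z : Fin K → ℂ) (d : Fin K → ℝ),
      Function.Injective z ∧ (∀ k, ‖z k‖ = 1) ∧ (∀ k, 0 < d k) ∧
      T = ∑ k, (d k) • Matrix.vecMulVec (vN N (z k)) (star (vN N (z k))) := by
  obtain ⟨z, d, hinj, hnorm, hpos, -, hsum⟩ :=
    (hT ▸ isToeplitz_toepMat N u).exists_vandermonde_decomposition hPSD hK.symm
  exact ⟨z, d, hinj, hnorm, hpos, hsum⟩

/-- Vandermonde decomposition of a PSD Hermitian Toeplitz matrix of rank `K`:
`T = ∑_{k=1}^K d_k · v_N(z_k) · v_N(z_k)ᴴ` with distinct unimodular `z_k` and `d_k > 0`. -/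
theorem stmt7 (N : ℕ) (hN : 0 < N) (u : Fin N → ℂ)
    (T : Matrix (Fin N) (Fin N) ℂ) (hT : T = ToepMat N u)
    (hPSD : T.PosSemidef) (K : ℕ) (hK : K = T.rank) :
    ∃ (z : Fin K → ℂ) (d : Fin K → ℝ),
      Function.Injective z ∧ (∀ k, ‖z k‖ = 1) ∧ (∀ k, 0 < d k) ∧
      T = ∑ k, (d k) • Matrix.vecMulVec (vN N (z k)) (star (vN N (z k))) :=
  stmt7_general N u T hT hPSD K hK
end
end

section
/- (Weak duality between the fast dual SDP and the fast primal SDP.) Let N_M, N_l, N_F be positive integers, M = {p_1 < … < p_{N_m}} ⊆ {0,…,N_M−1}, F ⊆ {1,…,N_F} with |F| = N_f, U = {p·f : p ∈ M, f ∈ F} with elements U_1 < … < U_{N_u}, and N = N_F(N_M−1)+1. Suppose: (a) Q ∈ ℂ^{N_m×N_l×N_f} has frequency slices Q_f (f ∈ F), P ∈ ℂ^{N_u×N_u} is Hermitian, the block matrix [[P, Q̃_r],[Q̃_r^H, I_{N_l N_f}]] is positive semidefinite where Q̃_r = [R₁(Q_f)]_{f∈F} ∈ ℂ^{N_u×N_l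 N_f}, and ∑_{(i,j): U_j−U_i = k} P(i,j) = δ_{k,0} for all k = 0,…,N−1; (b) u ∈ ℂ^N, W ∈ ℂ^{N_l N_f×N_l N_f} Hermitian, Ỹ ∈ ℂ^{N_u×N_l N_f}, the block matrix [[T(u), Ỹ],[Ỹ^H, W]] is positive semidefinite, and Y ∈ ℂ^{N_m×N_l×N_f} satisfies Y_f = R₁*(Ỹ_f) for all f ∈ F, where Ỹ_f ∈ ℂ^{N_u×N_l} is the block of N_l columns of Ỹ associated with frequency f and R₁* is the adjoint of R₁. Then Re⟨Q, Y⟩ ≤ Tr(T(u)) + Tr(W). -/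
open Matrix BigOperators
open scoped ComplexOrder

noncomputable section

/-- The map `R₁ : ℂ^{N_m×N_l} → ℂ^{N_u×N_l}` for frequency value `fval`: row `i` of the
input is placed in the row `r` with `U_r = fval·p_i`; all other rows are zero. -/
def R1 (N_m N_l N_u N : ℕ) (p : Fin N_m → ℕ) (U : Fin N_u → Fin N) (fval : ℕ)
    (Q : Matrix (Fin N_m) (Fin N_l) ℂ) : Matrix (Fin N_u) (Fin N_l) ℂ :=
  fun r l => ∑ i : Fin N_m, if ((U r) : ℕ) = fval * p i then Q i l else 0

/-- The adjoint `R₁* : ℂ^{N_u×N_l} → ℂ^{N_m×N_l}` of `R₁` (w.r.t. the real entrywise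
inner product): row `i` of the output is the row `r` of the input with `U_r = fval·p_i`. -/
def R1star (N_m N_l N_u N : ℕ) (p : Fin N_m → ℕ) (U : Fin N_u → Fin N) (fval : ℕ)
    (Yt : Matrix (Fin N_u) (Fin N_l) ℂ) : Matrix (Fin N_m) (Fin N_l) ℂ :=
  fun i l => ∑ r : Fin N_u, if ((U r) : ℕ) = fval * p i then Yt r l else 0

/-- The lifted matrix `Q̃_r = [R₁(Q_f)]_{f ∈ F} ∈ ℂ^{N_u × N_l N_f}`. -/
def QtildeR (N_m N_l N_f N_u N : ℕ) (p : Fin N_m → ℕ) (U : Fin N_u → Fin N)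
    (fr : Fin N_f → ℕ) (Q : Fin N_m → Fin N_l → Fin N_f → ℂ) :
    Matrix (Fin N_u) (Fin N_f × Fin N_l) ℂ :=
  fun r q => R1 N_m N_l N_u N p U (fr q.1) (fun i l => Q i l q.1) r q.2

/-- Real inner product of tensors, `⟨Q,Y⟩_ℝ = Re ∑ conj(Q)·Y`. -/
def reInner {α β γ : Type*} [Fintype α] [Fintype β] [Fintype γ]
    (Q Y : α → β → γ → ℂ) : ℝ :=
  (∑ m, ∑ l, ∑ f, (starRingEnd ℂ) (Q m l f) * Y m l f).re

/-!
Flipping the sign of the off-diagonal block of the dual matrix keeps it positive semidefinite,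
and the trace of a product of two positive semidefinite matrices is nonnegative. Expanding
`tr([[P, -Q̃],[-Q̃ᴴ, I]] · [[T(u), Ỹ],[Ỹᴴ, W]]) ≥ 0` gives `2 Re tr(Q̃ᴴ Ỹ) ≤ tr(P T(u)) + tr W`.
Writing `T(u)` as a sum over lags `k`, the constraints on `P` collapse `tr(P T(u))` to `u₀`, and
since `R₁*` is the adjoint of `R₁`, `Re tr(Q̃ᴴ Ỹ) = ⟨Q, Y⟩`. Finally `u₀ ≥ 0` is a diagonal entry
of `T(u)` and `tr T(u) = N_u u₀ ≥ u₀`, which absorbs the factor 2.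
-/

open ComplexConjugate

namespace Matrix

variable {𝕜 n m : Type*} [RCLike 𝕜] [Fintype n] [Fintype m]

theorem trace_fromBlocks {α : Type*} [AddCommMonoid α] (A : Matrix n n α) (B : Matrix n m α)
    (C : Matrix m n α) (D : Matrix m m α) : (fromBlocks A B C D).trace = A.trace + D.trace := by
  simp [trace, Fintype.sum_sum_type]

theorem PosSemidef.trace_mul_nonneg {A B : Matrix n n 𝕜} (hA : A.PosSemidef)
    (hB : B.PosSemidef) : 0 ≤ (A * B).trace := by
  classical
  open scoped MatrixOrder in
  obtain ⟨C, rfl⟩ := CStarAlgebra.nonneg_iff_eq_star_mul_self.mp hB.nonneg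
  rw [← Matrix.mul_assoc, trace_mul_comm, ← Matrix.mul_assoc]
  exact (hA.mul_mul_conjTranspose_same C).trace_nonneg

theorem PosSemidef.fromBlocks_neg [DecidableEq n] [DecidableEq m] {A : Matrix n n 𝕜}
    {B : Matrix n m 𝕜} {D : Matrix m m 𝕜} (h : (fromBlocks A B Bᴴ D).PosSemidef) :
    (fromBlocks A (-B) (-B)ᴴ D).PosSemidef := by
  have := h.mul_mul_conjTranspose_same (fromBlocks (1 : Matrix n n 𝕜) 0 0 (-1 : Matrix m m 𝕜))
  simpa [fromBlocks_multiply, fromBlocks_conjTranspose] using this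

theorem re_trace_conjTranspose_mul_le [DecidableEq n] [DecidableEq m]
    {P T : Matrix n n 𝕜} {X Y : Matrix n m 𝕜} {D W : Matrix m m 𝕜}
    (h₁ : (fromBlocks P X Xᴴ D).PosSemidef) (h₂ : (fromBlocks T Y Yᴴ W).PosSemidef) :
    2 * RCLike.re (Xᴴ * Y).trace ≤ RCLike.re (P * T).trace + RCLike.re (D * W).trace := by
  have h := RCLike.nonneg_iff.mp (h₁.fromBlocks_neg.trace_mul_nonneg h₂) |>.1
  have hXY : (X * Yᴴ).trace = star (Xᴴ * Y).trace := by
    rw [← trace_conjTranspose, conjTranspose_mul, conjTranspose_conjTranspose, trace_mul_comm]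
  rw [fromBlocks_multiply, trace_fromBlocks] at h
  simp only [conjTranspose_neg, Matrix.neg_mul, trace_add, trace_neg, hXY, map_add, map_neg,
    RCLike.star_def, RCLike.conj_re] at h
  linarith

end Matrix

theorem ToepMat_apply_eq_sum {N : ℕ} (u : Fin N → ℂ) (a b : Fin N) :
    ToepMat N u a b = ∑ k : Fin N, ((if (b : ℕ) = a + k then u k else 0) +
      if (a : ℕ) = b + k ∧ (k : ℕ) ≠ 0 then conj (u k) else 0) := by
  rw [Finset.sum_add_distrib]
  by_cases hab : (a : ℕ) ≤ b
  · rw [Finset.sum_eq_single ⟨b - a, by omega⟩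
        (fun k _ hk => if_neg fun h => hk (Fin.ext (by simp; omega))) (by simp),
      Finset.sum_eq_zero fun k _ => if_neg (by omega)]
    simp [ToepMat, hab]
  · rw [Finset.sum_eq_zero (fun k _ => if_neg (by omega)),
      Finset.sum_eq_single ⟨a - b, by omega⟩
        (fun k _ hk => if_neg fun h => hk (Fin.ext (by simp; omega))) (by simp)]
    simp [ToepMat, hab]
    omega

def lagSum {ι : Type*} [Fintype ι] {N : ℕ} (U : ι → Fin N) (P : Matrix ι ι ℂ) (k : ℕ) : ℂ :=
  ∑ i, ∑ j, if (U j : ℕ) = U i + k then P i j else 0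

theorem Matrix.IsHermitian.conj_lagSum {ι : Type*} [Fintype ι] {N : ℕ} (U : ι → Fin N)
    {P : Matrix ι ι ℂ} (hP : P.IsHermitian) (k : ℕ) :
    conj (lagSum U P k) = ∑ i, ∑ j, if (U i : ℕ) = U j + k then P i j else 0 := by
  rw [lagSum, Finset.sum_comm]
  simp only [map_sum, apply_ite conj, map_zero]
  refine Fintype.sum_congr _ _ fun i => Fintype.sum_congr _ _ fun j => ?_
  rw [← hP.apply i j]
  rfl

theorem trace_mul_Tirr {N N_u : ℕ} (U : Fin N_u → Fin N) (u : Fin N → ℂ)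
    {P : Matrix (Fin N_u) (Fin N_u) ℂ} (hP : P.IsHermitian) :
    (P * Tirr N N_u U u).trace = ∑ k : Fin N,
      (conj (lagSum U P k) * u k + if (k : ℕ) = 0 then 0 else lagSum U P k * conj (u k)) := by
  simp only [hP.conj_lagSum]
  simp only [lagSum, trace, diag, mul_apply, Tirr, ToepMat_apply_eq_sum,
    Finset.mul_sum, Finset.sum_mul, mul_add, mul_ite, ite_mul, mul_zero, zero_mul]
  refine (Fintype.sum_congr _ _ fun i => Finset.sum_comm).trans
    (Finset.sum_comm.trans (Fintype.sum_congr _ _ fun k => ?_))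
  simp only [Finset.sum_add_distrib]
  split_ifs with hk <;> simp [hk]

theorem Tirr_apply_self {N N_u : ℕ} (hN : 0 < N) (U : Fin N_u → Fin N) (u : Fin N → ℂ)
    (i : Fin N_u) : Tirr N N_u U u i i = u ⟨0, hN⟩ := by
  simp [Tirr, ToepMat]

theorem trace_Tirr {N N_u : ℕ} (hN : 0 < N) (U : Fin N_u → Fin N) (u : Fin N → ℂ) :
    (Tirr N N_u U u).trace = N_u * u ⟨0, hN⟩ := by
  simp [Matrix.trace, Tirr_apply_self hN]

theorem trace_mul_Tirr_eq_apply_zero {N N_u : ℕ} (hN : 0 < N) (U : Fin N_u → Fin N)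
    (u : Fin N → ℂ) {P : Matrix (Fin N_u) (Fin N_u) ℂ} (hP : P.IsHermitian)
    (hlag : ∀ k : ℕ, k < N → lagSum U P k = if k = 0 then 1 else 0) :
    (P * Tirr N N_u U u).trace = u ⟨0, hN⟩ := by
  rw [trace_mul_Tirr U u hP, Finset.sum_eq_single ⟨0, hN⟩ (fun k _ hk => ?_) (by simp)]
  · simp [hlag 0 hN]
  · have hk₀ : (k : ℕ) ≠ 0 := fun h => hk (Fin.ext h)
    simp [hlag k k.isLt, hk₀]

theorem sum_conj_R1_mul {N_m N_l N_u N : ℕ} (p : Fin N_m → ℕ) (U : Fin N_u → Fin N)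
    (fval : ℕ) (Q : Matrix (Fin N_m) (Fin N_l) ℂ) (Yt : Matrix (Fin N_u) (Fin N_l) ℂ) :
    ∑ r, ∑ l, conj (R1 N_m N_l N_u N p U fval Q r l) * Yt r l =
      ∑ i, ∑ l, conj (Q i l) * R1star N_m N_l N_u N p U fval Yt i l := by
  simp only [R1, R1star, map_sum, Finset.sum_mul, Finset.mul_sum, apply_ite conj, map_zero,
    ite_mul, mul_ite, zero_mul, mul_zero]
  exact (Fintype.sum_congr _ _ fun r => Finset.sum_comm).trans
    (Finset.sum_comm.trans (Fintype.sum_congr _ _ fun i => Finset.sum_comm))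

theorem reInner_eq_re_trace_QtildeR {N_m N_l N_f N_u N : ℕ} (p : Fin N_m → ℕ)
    (U : Fin N_u → Fin N) (fr : Fin N_f → ℕ) (Q Y : Fin N_m → Fin N_l → Fin N_f → ℂ)
    (Yt : Matrix (Fin N_u) (Fin N_f × Fin N_l) ℂ)
    (hY : ∀ f i l, Y i l f = R1star N_m N_l N_u N p U (fr f) (fun r l' => Yt r (f, l')) i l) :
    reInner Q Y = ((QtildeR N_m N_l N_f N_u N p U fr Q)ᴴ * Yt).trace.re := by
  have hslice : ∀ f, ∑ l, ∑ r, conj (QtildeR N_m N_l N_f N_u N p U fr Q r (f, l)) * Yt r (f, l) =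
      ∑ i, ∑ l, conj (Q i l f) * Y i l f := fun f => by
    rw [Finset.sum_comm]
    simp only [hY]
    exact sum_conj_R1_mul p U (fr f) _ fun r l => Yt r (f, l)
  simp only [reInner, Matrix.trace, Matrix.diag, Matrix.mul_apply, Matrix.conjTranspose_apply,
    Fintype.sum_prod_type, RCLike.star_def, hslice]
  exact congrArg Complex.re
    ((Fintype.sum_congr _ _ fun m => Finset.sum_comm).trans Finset.sum_comm)

theorem stmt8_general (N_M N_l N_F : ℕ)
    (N : ℕ) (hN : N = N_F * (N_M - 1) + 1)
    -- sensor positions M = {p_1 < … < p_{N_m}} ⊆ {0,…,N_M-1}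
    (N_m : ℕ) (p : Fin N_m → ℕ)
    -- frequencies F ⊆ {1,…,N_F}, |F| = N_f
    (N_f : ℕ) (fr : Fin N_f → ℕ)
    -- U = {p·f : p ∈ M, f ∈ F} with elements U_1 < … < U_{N_u}
    (N_u : ℕ) (U : Fin N_u → Fin N)
    -- (a) feasible point of the fast dual SDP
    (Q : Fin N_m → Fin N_l → Fin N_f → ℂ)
    (P : Matrix (Fin N_u) (Fin N_u) ℂ) (hPH : P.IsHermitian)
    (hPSD1 : (Matrix.fromBlocks P (QtildeR N_m N_l N_f N_u N p U fr Q)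
        (QtildeR N_m N_l N_f N_u N p U fr Q)ᴴ
        (1 : Matrix (Fin N_f × Fin N_l) (Fin N_f × Fin N_l) ℂ)).PosSemidef)
    (htr : ∀ k : ℕ, k < N →
      (∑ i : Fin N_u, ∑ j : Fin N_u, if ((U j) : ℕ) = ((U i) : ℕ) + k then P i j else 0)
        = if k = 0 then 1 else 0)
    -- (b) feasible point of the fast primal SDP
    (u : Fin N → ℂ)
    (W : Matrix (Fin N_f × Fin N_l) (Fin N_f × Fin N_l) ℂ)
    (Yt : Matrix (Fin N_u) (Fin N_f × Fin N_l) ℂ)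
    (hPSD2 : (Matrix.fromBlocks (Tirr N N_u U u) Yt Ytᴴ W).PosSemidef)
    (Y : Fin N_m → Fin N_l → Fin N_f → ℂ)
    (hY : ∀ (f : Fin N_f) (i : Fin N_m) (l : Fin N_l),
      Y i l f = R1star N_m N_l N_u N p U (fr f) (fun r l' => Yt r (f, l')) i l) :
    reInner Q Y ≤ (Tirr N N_u U u).trace.re + W.trace.re := by
  have hN₀ : 0 < N := by omega
  have hN_u : 0 < N_u := Nat.pos_of_ne_zero fun h => by
    subst h
    simpa using htr 0 hN₀
  have hduality := Matrix.re_trace_conjTranspose_mul_le hPSD1 hPSD2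
  rw [one_mul, trace_mul_Tirr_eq_apply_zero hN₀ U u hPH htr] at hduality
  have hT : (Tirr N N_u U u).PosSemidef := hPSD2.submatrix Sum.inl
  have hW : W.PosSemidef := hPSD2.submatrix Sum.inr
  have hu₀ : 0 ≤ (u ⟨0, hN₀⟩).re := by
    simpa [Tirr_apply_self hN₀] using (Complex.le_def.mp (hT.diag_nonneg (i := ⟨0, hN_u⟩))).1
  have hW₀ : 0 ≤ W.trace.re := (Complex.le_def.mp hW.trace_nonneg).1
  rw [reInner_eq_re_trace_QtildeR p U fr Q Y Yt hY, trace_Tirr hN₀]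
  have hu₀_le : (u ⟨0, hN₀⟩).re ≤ N_u * (u ⟨0, hN₀⟩).re :=
    le_mul_of_one_le_left hu₀ (by exact_mod_cast hN_u)
  simp only [RCLike.re_to_complex] at hduality
  rw [Complex.mul_re, Complex.natCast_re, Complex.natCast_im, zero_mul, sub_zero]
  linarith

/-- Weak duality between the fast dual SDP and the fast primal SDP:
any feasible point `(Q,P)` for the dual and `(u,W,Ỹ)` for the primal satisfy
`Re⟨Q,Y⟩ ≤ Tr(T(u)) + Tr(W)`. -/
theorem stmt8 (N_M N_l N_F : ℕ) (hM : 0 < N_M) (hl : 0 < N_l) (hF : 0 < N_F)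
    (N : ℕ) (hN : N = N_F * (N_M - 1) + 1)
    -- sensor positions M = {p_1 < … < p_{N_m}} ⊆ {0,…,N_M-1}
    (N_m : ℕ) (p : Fin N_m → ℕ) (hp : StrictMono p) (hpb : ∀ i, p i ≤ N_M - 1)
    -- frequencies F ⊆ {1,…,N_F}, |F| = N_f
    (N_f : ℕ) (fr : Fin N_f → ℕ) (hfr : StrictMono fr)
    (hfrb : ∀ f, 1 ≤ fr f ∧ fr f ≤ N_F)
    -- U = {p·f : p ∈ M, f ∈ F} with elements U_1 < … < U_{N_u}
    (N_u : ℕ) (U : Fin N_u → Fin N) (hU : StrictMono U)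
    (hUset : ∀ n : Fin N, (∃ r, U r = n) ↔ ∃ i f, p i * fr f = (n : ℕ))
    -- (a) feasible point of the fast dual SDP
    (Q : Fin N_m → Fin N_l → Fin N_f → ℂ)
    (P : Matrix (Fin N_u) (Fin N_u) ℂ) (hPH : P.IsHermitian)
    (hPSD1 : (Matrix.fromBlocks P (QtildeR N_m N_l N_f N_u N p U fr Q)
        (QtildeR N_m N_l N_f N_u N p U fr Q)ᴴ
        (1 : Matrix (Fin N_f × Fin N_l) (Fin N_f × Fin N_l) ℂ)).PosSemidef)
    (htr : ∀ k : ℕ, k < N →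
      (∑ i : Fin N_u, ∑ j : Fin N_u, if ((U j) : ℕ) = ((U i) : ℕ) + k then P i j else 0)
        = if k = 0 then 1 else 0)
    -- (b) feasible point of the fast primal SDP
    (u : Fin N → ℂ)
    (W : Matrix (Fin N_f × Fin N_l) (Fin N_f × Fin N_l) ℂ) (hWH : W.IsHermitian)
    (Yt : Matrix (Fin N_u) (Fin N_f × Fin N_l) ℂ)
    (hPSD2 : (Matrix.fromBlocks (Tirr N N_u U u) Yt Ytᴴ W).PosSemidef)
    (Y : Fin N_m → Fin N_l → Fin N_f → ℂ)
    (hY : ∀ (f : Fin N_f) (i : Fin N_m) (l : Fin N_l),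
      Y i l f = R1star N_m N_l N_u N p U (fr f) (fun r l' => Yt r (f, l')) i l) :
    reInner Q Y ≤ (Tirr N N_u U u).trace.re + W.trace.re :=
  stmt8_general N_M N_l N_F N hN N_m p N_f fr N_u U Q P hPH hPSD1 htr u W Yt hPSD2 Y hY
end
end
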